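/- arXiv:1602.04184 — 3 statements merged into one kernel-verified Lean document; each statement's English description precedes it below -/
import Mathlib

section
/- There exists an IsMeBot program: a partial recursive code c : Nat.Partrec.Code such that for every input n : ℕ, c.eval n = Part.some (if n = Encodable.encode c then 1 else 0); i.e., c is a total program that outputs 1 (Cooperate) exactly when its input is its own code number, and 0 (Defect) otherwise. -/
open Nat.Partrec Encodable

theorem Nat.Partrec.Code.exists_eval_eq_some {f : Code → ℕ → ℕ} (hf : Computable₂ f) :
    ∃ c : Code, ∀ n, c.eval n = Part.some (f c n) :=
  let ⟨c, hc⟩ := Code.fixed_point₂ hf.partrec₂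
  ⟨c, congrFun hc⟩

theorem computable₂_indicator_eq_encode :
    Computable₂ fun (c : Code) (n : ℕ) => if n = encode c then 1 else 0 :=
  (Primrec.ite (Primrec.eq.comp Primrec.snd (Primrec.encode.comp Primrec.fst))
    (Primrec.const 1) (Primrec.const 0)).to_comp

/-- There exists an IsMeBot program: a partial recursive code that, on any
input `n`, halts and outputs `1` (Cooperate) exactly when `n` is its own
Gödel number, and `0` (Defect) otherwise. -/
theorem exists_isMeBot :
    ∃ c : Nat.Partrec.Code,
      ∀ n : ℕ, c.eval n = Part.some (if n = Encodable.encode c then 1 else 0) :=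
  Code.exists_eval_eq_some computable₂_indicator_eq_encode
end

section
/- Let c : Nat.Partrec.Code satisfy the IsMeBot specification: for every n : ℕ, c.eval n = Part.some (if n = Encodable.encode c then 1 else 0). Then (i) c.eval (Encodable.encode c) = Part.some 1, so (c, c) plays (Cooperate, Cooperate) and each player receives payoff 2; and (ii) for every code d and every a ≤ 1 with d.eval (Encodable.encode c) = Part.some a, there exists b with c.eval (Encodable.encode d) = Part.some b and pay a b ≤ 2, and moreover if d ≠ c then pay a b ≤ 1. Hence no unilateral replacement of either player's program can yield a payoff above 2, i.e., (c, c) is a program equilibrium. -/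
/-- Payoff to player 1 in the open-source Prisoner's Dilemma when it outputs
`a` and the opponent outputs `b` (outputs in {0,1}, with 1 = Cooperate and
0 = Defect). -/
def pay : ℕ → ℕ → ℕ
  | 1, 1 => 2
  | 1, 0 => 0
  | 0, 1 => 3
  | 0, 0 => 1
  | _, _ => 0

/-! IsMeBot cooperates exactly with programs whose code is literally its own. A deviation `d ≠ c`
has a different Gödel number, so it is met with defection and earns at most the mutual-defection
payoff 1; the only remaining "deviation" is `c` itself, which cooperates and earns 2. -/

theorem pay_le_one_of_defect (a : ℕ) : pay a 0 ≤ 1 := by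
  rcases a with _ | _ | a <;> simp [pay]

open Nat.Partrec Encodable

def IsMeBot (c : Code) : Prop :=
  ∀ n : ℕ, c.eval n = Part.some (if n = encode c then 1 else 0)

namespace IsMeBot

variable {c : Code}

theorem eval_encode_self (hc : IsMeBot c) : c.eval (encode c) = Part.some 1 := by
  simp [hc (encode c)]

theorem eval_encode_of_ne (hc : IsMeBot c) {d : Code} (hd : d ≠ c) :
    c.eval (encode d) = Part.some 0 := by
  simp [hc (encode d), encode_injective.ne hd]

end IsMeBot

/-- IsMeBot cooperates with itself (earning the mutual-cooperation payoff 2),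
and no unilateral deviation can earn a payoff above 2 against IsMeBot; indeed
any deviating program `d ≠ c` earns at most 1.  Hence (IsMeBot, IsMeBot) is a
program equilibrium. -/
theorem isMeBot_program_equilibrium (c : Nat.Partrec.Code)
    (hc : ∀ n : ℕ, c.eval n = Part.some (if n = Encodable.encode c then 1 else 0)) :
    c.eval (Encodable.encode c) = Part.some 1 ∧
      ∀ (d : Nat.Partrec.Code) (a : ℕ), a ≤ 1 →
        d.eval (Encodable.encode c) = Part.some a →
        ∃ b : ℕ, c.eval (Encodable.encode d) = Part.some b ∧
          pay a b ≤ 2 ∧ (d ≠ c → pay a b ≤ 1) := by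
  have hc : IsMeBot c := hc
  refine ⟨hc.eval_encode_self, fun d a _ hda => ?_⟩
  by_cases hd : d = c
  · subst hd
    obtain rfl : a = 1 := Part.some_injective (hda.symm.trans hc.eval_encode_self)
    exact ⟨1, hc.eval_encode_self, le_rfl, fun h => absurd rfl h⟩
  · have hdefect := pay_le_one_of_defect a
    exact ⟨0, hc.eval_encode_of_ne hd, hdefect.trans one_le_two, fun _ => hdefect⟩
end

section
/- Geometric-mean interpolation between asymptotically separated functions: if f, g : ℕ → ℕ satisfy f ≺ g and f n ≥ 1 for all n, then the function w : ℕ → ℕ defined by w n = Nat.sqrt (f n * g n) satisfies f ≺ w and w ≺ g. (This is the construction used in the proof of Parametric Bounded Löb to choose g with lg k ≺ g(k) and 𝓔∘g ≺ f, and h with 𝓔∘g ≺ h ≺ f.) -/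
/-! Squaring reduces both halves to `f ≺ g` at a larger scale: with `w = √(f g)`, the bound
`(M + 1)² f ≤ g` gives `(M f + 1)² ≤ ((M + 1) f)² ≤ f g` because `f ≥ 1`, and `M² f < g` gives
`(M w)² ≤ M² f g < g²`. -/

/-- Asymptotic domination: `Dom f g` (written `f ≺ g` in the paper) means that
for every `M` there is an `N` such that `M * f n < g n` for all `n > N`. -/
def Dom (f g : ℕ → ℕ) : Prop :=
  ∀ M : ℕ, ∃ N : ℕ, ∀ n > N, M * f n < g n

theorem Dom.of_forall_imp {f g f' g' : ℕ → ℕ} (h : Dom f g)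
    (H : ∀ M, ∃ K, ∀ n, K * f n < g n → M * f' n < g' n) : Dom f' g' := by
  intro M
  obtain ⟨K, hK⟩ := H M
  obtain ⟨N, hN⟩ := h K
  exact ⟨N, fun n hn => hK n (hN n hn)⟩

theorem Nat.mul_lt_sqrt_mul_of_sq_mul_le {a b M : ℕ} (ha : 1 ≤ a) (h : (M + 1) ^ 2 * a ≤ b) :
    M * a < Nat.sqrt (a * b) := by
  rw [Nat.lt_iff_add_one_le, Nat.le_sqrt]
  calc (M * a + 1) * (M * a + 1) ≤ ((M + 1) * a) * ((M + 1) * a) := by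
        have : M * a + 1 ≤ (M + 1) * a := by nlinarith
        exact Nat.mul_self_le_mul_self this
    _ = a * ((M + 1) ^ 2 * a) := by ring
    _ ≤ a * b := Nat.mul_le_mul_left a h

theorem Nat.mul_sqrt_mul_lt_of_sq_mul_lt {a b M : ℕ} (h : M ^ 2 * a < b) :
    M * Nat.sqrt (a * b) < b := by
  have hb : 0 < b := Nat.zero_lt_of_lt h
  refine Nat.mul_self_lt_mul_self_iff.mp ?_
  calc M * Nat.sqrt (a * b) * (M * Nat.sqrt (a * b))
        = M ^ 2 * (Nat.sqrt (a * b) * Nat.sqrt (a * b)) := by ring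
    _ ≤ M ^ 2 * (a * b) := Nat.mul_le_mul_left _ (Nat.sqrt_le _)
    _ = M ^ 2 * a * b := by ring
    _ < b * b := Nat.mul_lt_mul_of_pos_right h hb

/-- Geometric-mean interpolation: if `f ≺ g` and `f ≥ 1` everywhere, then the
integer geometric mean `w n = √(f n * g n)` satisfies `f ≺ w ≺ g`. -/
theorem dom_sqrt_mul (f g : ℕ → ℕ) (hfg : Dom f g) (hf : ∀ n, 1 ≤ f n) :
    Dom f (fun n => Nat.sqrt (f n * g n)) ∧ Dom (fun n => Nat.sqrt (f n * g n)) g :=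
  ⟨hfg.of_forall_imp fun M =>
      ⟨(M + 1) ^ 2, fun n h => Nat.mul_lt_sqrt_mul_of_sq_mul_le (hf n) h.le⟩,
    hfg.of_forall_imp fun M => ⟨M ^ 2, fun _ => Nat.mul_sqrt_mul_lt_of_sq_mul_lt⟩⟩
end
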